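/- arXiv:1803.02109 — 2 statements merged into one kernel-verified Lean document; each statement's English description precedes it below -/
import Mathlib

section
/- For every T > 0, L₁ > 0 and β₀ > 0 there exists δ > 0 such that for every L₂ with 0 < L₂ < δ, both tail integrals diverge past T: ∫_{L₁}^{∞} G(y)⁻¹ dy > T and ∫_{−∞}^{−L₁} G(y)⁻¹ dy > T (the integrals taken with values in [0,∞]). Equivalently, with t₁ = T − ∫_{−∞}^{−L₁} G(y)⁻¹ dy, t₂ = T − ∫_{L₁}^{∞} G(y)⁻¹ dy and t* = max(t₁, t₂), one has t* < 0. -/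
/-!
For `L₂ = 0` the generator bound is `G(y) = L₁ (1 + |y|)`, whose reciprocal has a divergent tail
integral. Quantitatively: for `L₂ ≤ 1`, on any window `[L₁, M]` the terms of `G` carrying `L₂`
are at most `L₂ D y` with `D = windowConst L₁ β₀ M`, so once `L₂ D ≤ 1` we get
`G(y) ≤ (L₁ + 2) y` there, and the tail integral of `G⁻¹` is at least `log (M / L₁) / (L₁ + 2)`.
Taking `M = L₁ exp ((L₁ + 2)(T + 1))` makes this `T + 1`. The negative tail is the same integral
since `G` is even.
-/

open MeasureTheory

/-- The generator bound `G` for the quadratic first-order adjoint BSDE. -/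
noncomputable def Gfun (L₁ L₂ β₀ : ℝ) (y : ℝ) : ℝ :=
  L₁ + (L₂ + L₁ + β₀⁻¹ * L₁ * L₂) * |y|
    + (L₂ + β₀⁻¹ * (L₁ * L₂ + L₂ ^ 2)) * y ^ 2 + β₀⁻¹ * L₂ ^ 2 * |y| ^ 3

open Set

lemma Gfun_pos {L₁ L₂ β₀ : ℝ} (hL₁ : 0 < L₁) (hL₂ : 0 ≤ L₂) (hβ₀ : 0 ≤ β₀) (y : ℝ) :
    0 < Gfun L₁ L₂ β₀ y := by
  unfold Gfun; positivity

lemma Gfun_neg (L₁ L₂ β₀ y : ℝ) : Gfun L₁ L₂ β₀ (-y) = Gfun L₁ L₂ β₀ y := by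
  simp only [Gfun, abs_neg, neg_sq]

lemma measurable_Gfun (L₁ L₂ β₀ : ℝ) : Measurable (Gfun L₁ L₂ β₀) := by
  unfold Gfun; fun_prop

lemma setLIntegral_Iic_neg (a : ℝ) (f : ℝ → ENNReal) :
    ∫⁻ y in Iic (-a), f y = ∫⁻ y in Ici a, f (-y) := by
  have h := (Measure.measurePreserving_neg (volume : Measure ℝ)).setLIntegral_comp_preimage_emb
    (MeasurableEquiv.neg ℝ).measurableEmbedding f (Iic (-a))
  rw [neg_preimage, neg_Iic, neg_neg] at h
  exact h.symm

lemma ofReal_log_div_le_setLIntegral_inv {f : ℝ → ℝ} {a b c : ℝ} (ha : 0 < a) (hab : a ≤ b)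
    (hc : 0 < c) (hf : Measurable f) (hf_pos : ∀ y ∈ Ioc a b, 0 < f y)
    (hf_le : ∀ y ∈ Ioc a b, f y ≤ c * y) :
    ENNReal.ofReal (Real.log (b / a) / c) ≤ ∫⁻ y in Ioc a b, ENNReal.ofReal (f y)⁻¹ := by
  have hb : 0 < b := ha.trans_le hab
  have hint : ∫ y in Ioc a b, (c * y)⁻¹ = Real.log (b / a) / c := by
    simp_rw [mul_inv]
    rw [← intervalIntegral.integral_of_le hab, intervalIntegral.integral_const_mul,
      integral_inv_of_pos ha hb, inv_mul_eq_div]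
  have hcont : ContinuousOn (fun y : ℝ => (c * y)⁻¹) (Icc a b) :=
    (continuousOn_const.mul continuousOn_id).inv₀ fun y hy =>
      mul_ne_zero hc.ne' (ha.trans_le hy.1).ne'
  have hnonneg : 0 ≤ᵐ[volume.restrict (Ioc a b)] fun y : ℝ => (c * y)⁻¹ := by
    filter_upwards [ae_restrict_mem measurableSet_Ioc] with y hy
    have : 0 < y := ha.trans hy.1
    positivity
  calc ENNReal.ofReal (Real.log (b / a) / c)
      = ∫⁻ y in Ioc a b, ENNReal.ofReal (c * y)⁻¹ := by
        rw [← hint, ofReal_integral_eq_lintegral_ofReal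
          (hcont.integrableOn_Icc.mono_set Ioc_subset_Icc_self) hnonneg]
    _ ≤ ∫⁻ y in Ioc a b, ENNReal.ofReal (f y)⁻¹ :=
        setLIntegral_mono hf.inv.ennreal_ofReal fun y hy =>
          ENNReal.ofReal_le_ofReal (inv_anti₀ (hf_pos y hy) (hf_le y hy))

noncomputable def windowConst (L₁ β₀ M : ℝ) : ℝ :=
  (1 + β₀⁻¹ * L₁) + (1 + β₀⁻¹ * L₁ + β₀⁻¹) * M + β₀⁻¹ * M ^ 2

lemma windowConst_pos {L₁ β₀ M : ℝ} (hL₁ : 0 ≤ L₁) (hβ₀ : 0 ≤ β₀) (hM : 0 ≤ M) :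
    0 < windowConst L₁ β₀ M := by
  unfold windowConst; positivity

lemma Gfun_le_mul_of_mem_Icc {L₁ L₂ β₀ M y : ℝ} (hL₁ : 0 ≤ L₁) (hL₂ : 0 ≤ L₂) (hL₂₁ : L₂ ≤ 1)
    (hβ₀ : 0 ≤ β₀) (hy : y ∈ Icc L₁ M) :
    Gfun L₁ L₂ β₀ y ≤ (L₁ + 1 + L₂ * windowConst L₁ β₀ M) * y := by
  obtain ⟨hLy, hyM⟩ := hy
  have hy : 0 ≤ y := hL₁.trans hLy
  have hb : 0 ≤ β₀⁻¹ := inv_nonneg.2 hβ₀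
  have hL₂y : L₂ * y ≤ y := mul_le_of_le_one_left hy hL₂₁
  have hsq : L₂ * y * y ≤ M * M := mul_le_mul (hL₂y.trans hyM) hyM hy (hy.trans hyM)
  rw [Gfun, abs_of_nonneg hy, windowConst]
  -- the gap is `(y - L₁) + L₂ (1 + L₁/β₀) y (M - y) + L₂ y (M - L₂ y)/β₀ + L₂ y (M² - L₂ y²)/β₀`
  nlinarith [mul_nonneg (mul_nonneg hL₂ (add_nonneg zero_le_one (mul_nonneg hb hL₁)))
      (mul_nonneg hy (sub_nonneg.2 hyM)),
    mul_nonneg (mul_nonneg hb (mul_nonneg hL₂ hy)) (sub_nonneg.2 (hL₂y.trans hyM)),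
    mul_nonneg (mul_nonneg hb (mul_nonneg hL₂ hy)) (sub_nonneg.2 hsq)]

lemma ofReal_log_div_le_lintegral_Ici_inv_Gfun {L₁ L₂ β₀ M : ℝ} (hL₁ : 0 < L₁) (hL₂ : 0 ≤ L₂)
    (hL₂₁ : L₂ ≤ 1) (hβ₀ : 0 ≤ β₀) (hM : L₁ ≤ M) (hsmall : L₂ * windowConst L₁ β₀ M ≤ 1) :
    ENNReal.ofReal (Real.log (M / L₁) / (L₁ + 2))
      ≤ ∫⁻ y in Ici L₁, ENNReal.ofReal (Gfun L₁ L₂ β₀ y)⁻¹ := by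
  have hG_le : ∀ y ∈ Ioc L₁ M, Gfun L₁ L₂ β₀ y ≤ (L₁ + 2) * y := fun y hy =>
    calc Gfun L₁ L₂ β₀ y ≤ (L₁ + 1 + L₂ * windowConst L₁ β₀ M) * y :=
          Gfun_le_mul_of_mem_Icc hL₁.le hL₂ hL₂₁ hβ₀ (Ioc_subset_Icc_self hy)
      _ ≤ (L₁ + 2) * y :=
          mul_le_mul_of_nonneg_right (by linarith) (hL₁.le.trans hy.1.le)
  calc ENNReal.ofReal (Real.log (M / L₁) / (L₁ + 2))
      ≤ ∫⁻ y in Ioc L₁ M, ENNReal.ofReal (Gfun L₁ L₂ β₀ y)⁻¹ :=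
        ofReal_log_div_le_setLIntegral_inv hL₁ hM (by linarith) (measurable_Gfun L₁ L₂ β₀)
          (fun y _ => Gfun_pos hL₁ hL₂ hβ₀ y) hG_le
    _ ≤ ∫⁻ y in Ici L₁, ENNReal.ofReal (Gfun L₁ L₂ β₀ y)⁻¹ :=
        lintegral_mono_set (Ioc_subset_Icc_self.trans Icc_subset_Ici_self)

/-- Lemma 3.2: for every `T > 0`, `L₁ > 0`, `β₀ > 0` there exists `δ > 0`
such that for every `0 < L₂ < δ` both tail integrals of `G⁻¹` exceed `T`
(equivalently, `t* < 0`). -/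
theorem t_star_negative (T L₁ β₀ : ℝ) (hT : 0 < T) (hL₁ : 0 < L₁) (hβ₀ : 0 < β₀) :
    ∃ δ > 0, ∀ L₂ : ℝ, 0 < L₂ → L₂ < δ →
      ENNReal.ofReal T < ∫⁻ y in Set.Ici L₁, ENNReal.ofReal ((Gfun L₁ L₂ β₀ y)⁻¹) ∧
      ENNReal.ofReal T < ∫⁻ y in Set.Iic (-L₁), ENNReal.ofReal ((Gfun L₁ L₂ β₀ y)⁻¹) := by
  set M := L₁ * Real.exp ((L₁ + 2) * (T + 1))
  have hM : L₁ ≤ M := le_mul_of_one_le_right hL₁.le (Real.one_le_exp (by positivity))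
  have hlog : Real.log (M / L₁) / (L₁ + 2) = T + 1 := by
    rw [mul_div_cancel_left₀ _ hL₁.ne', Real.log_exp, mul_div_cancel_left₀ _ (by positivity)]
  have hD := windowConst_pos hL₁.le hβ₀.le (hL₁.le.trans hM)
  refine ⟨min 1 (1 / windowConst L₁ β₀ M), by positivity, fun L₂ hL₂ hδ => ?_⟩
  have hsmall : L₂ * windowConst L₁ β₀ M ≤ 1 :=
    (le_div_iff₀ hD).1 (hδ.trans_le (min_le_right _ _)).le
  have htail : ENNReal.ofReal T < ∫⁻ y in Ici L₁, ENNReal.ofReal (Gfun L₁ L₂ β₀ y)⁻¹ :=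
    calc ENNReal.ofReal T < ENNReal.ofReal (T + 1) :=
          (ENNReal.ofReal_lt_ofReal_iff (by linarith)).2 (lt_add_one T)
      _ = ENNReal.ofReal (Real.log (M / L₁) / (L₁ + 2)) := by rw [hlog]
      _ ≤ _ := ofReal_log_div_le_lintegral_Ici_inv_Gfun hL₁ hL₂.le
          (hδ.trans_le (min_le_left _ _)).le hβ₀.le hM hsmall
  refine ⟨htail, ?_⟩
  simpa only [setLIntegral_Iic_neg, Gfun_neg] using htail
end

section
/- Fix L₁ > 0 and β₀ > 0, and for each L₂ > 0 let G_{L₂} : ℝ → ℝ be defined as G_{L₂}(y) = L₁ + (L₂ + L₁ + β₀⁻¹L₁L₂)|y| + (L₂ + β₀⁻¹(L₁L₂ + L₂²))y² + β₀⁻¹L₂²|y|³. Then the [0,∞]-valued integral ∫_{L₁}^{∞} G_{L₂}(y)⁻¹ dy tends to ∞ as L₂ → 0 from the right; that is, for every M > 0 there exists δ > 0 such that 0 < L₂ < δ implies ∫_{L₁}^{∞} G_{L₂}(y)⁻¹ dy > M. -/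
open MeasureTheory

/-- As `L₂ → 0⁺`, the tail integral `∫_{L₁}^∞ G_{L₂}(y)⁻¹ dy` tends to `∞`:
for every `M > 0` there is `δ > 0` such that `0 < L₂ < δ` implies the
integral exceeds `M`. -/
theorem tail_integral_tendsto_infty (L₁ β₀ : ℝ) (hL₁ : 0 < L₁) (hβ₀ : 0 < β₀) :
    ∀ M : ℝ, 0 < M → ∃ δ > 0, ∀ L₂ : ℝ, 0 < L₂ → L₂ < δ →
      ENNReal.ofReal M < ∫⁻ y in Set.Ici L₁, ENNReal.ofReal ((Gfun L₁ L₂ β₀ y)⁻¹) := by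
  intro M hM
  set R : ℝ := (1 + L₁) * Real.exp (2 * L₁ * (M + 1)) - 1 with hR
  have hexp : (1 : ℝ) < Real.exp (2 * L₁ * (M + 1)) := by
    rw [Real.one_lt_exp_iff]
    positivity
  have hRgt : L₁ < R := by
    have h1 : (1 + L₁) * 1 < (1 + L₁) * Real.exp (2 * L₁ * (M + 1)) := by
      apply mul_lt_mul_of_pos_left hexp; linarith
    simp only [mul_one] at h1
    simp only [hR]; linarith
  have hRpos : 0 < R := lt_trans hL₁ hRgt
  set C : ℝ := (1 + β₀⁻¹ * L₁) * R + (1 + β₀⁻¹ * L₁ + β₀⁻¹) * R ^ 2 + β₀⁻¹ * R ^ 3 with hC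
  have hCpos : 0 < C := by positivity
  refine ⟨min 1 (L₁ / C), lt_min one_pos (by positivity), ?_⟩
  intro L₂ hL₂ hL₂δ
  have hL₂1 : L₂ ≤ 1 := le_of_lt (lt_of_lt_of_le hL₂δ (min_le_left _ _))
  have hL₂C : L₂ * C ≤ L₁ := by
    have := lt_of_lt_of_le hL₂δ (min_le_right _ _)
    rw [lt_div_iff₀ hCpos] at this
    linarith
  -- pointwise bound on Ioc L₁ R
  have key : ∀ y ∈ Set.Ioc L₁ R,
      ENNReal.ofReal ((2 * L₁ * (1 + y))⁻¹) ≤ ENNReal.ofReal ((Gfun L₁ L₂ β₀ y)⁻¹) := by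
    intro y hy
    have hy1 : L₁ < y := hy.1
    have hy2 : y ≤ R := hy.2
    have hypos : 0 < y := lt_trans hL₁ hy1
    have habs : |y| = y := abs_of_pos hypos
    apply ENNReal.ofReal_le_ofReal
    apply inv_anti₀
    · have : Gfun L₁ L₂ β₀ y = L₁ * (1 + y) +
        L₂ * ((1 + β₀⁻¹ * L₁) * y + (1 + β₀⁻¹ * L₁ + β₀⁻¹ * L₂) * y ^ 2 + β₀⁻¹ * L₂ * y ^ 3) := by
        simp only [Gfun, habs]; ring
      rw [this]
      have hbr : 0 < (1 + β₀⁻¹ * L₁) * y + (1 + β₀⁻¹ * L₁ + β₀⁻¹ * L₂) * y ^ 2 + β₀⁻¹ * L₂ * y ^ 3 := by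
        positivity
      positivity
    · have hbr : (1 + β₀⁻¹ * L₁) * y + (1 + β₀⁻¹ * L₁ + β₀⁻¹ * L₂) * y ^ 2 + β₀⁻¹ * L₂ * y ^ 3 ≤ C := by
      -- each term bounded using y ≤ R, L₂ ≤ 1
        have h1 : (1 + β₀⁻¹ * L₁) * y ≤ (1 + β₀⁻¹ * L₁) * R := by
          apply mul_le_mul_of_nonneg_left hy2; positivity
        have hy2sq : y ^ 2 ≤ R ^ 2 := by nlinarith
        have hy3 : y ^ 3 ≤ R ^ 3 := by nlinarith
        have h2 : (1 + β₀⁻¹ * L₁ + β₀⁻¹ * L₂) * y ^ 2 ≤ (1 + β₀⁻¹ * L₁ + β₀⁻¹) * R ^ 2 := by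
          apply mul_le_mul
          · have : β₀⁻¹ * L₂ ≤ β₀⁻¹ * 1 := by
              apply mul_le_mul_of_nonneg_left hL₂1; positivity
            linarith
          · exact hy2sq
          · positivity
          · positivity
        have h3 : β₀⁻¹ * L₂ * y ^ 3 ≤ β₀⁻¹ * R ^ 3 := by
          have hle : β₀⁻¹ * L₂ ≤ β₀⁻¹ := by
            have : β₀⁻¹ * L₂ ≤ β₀⁻¹ * 1 := by
              apply mul_le_mul_of_nonneg_left hL₂1; positivity
            linarith
          calc β₀⁻¹ * L₂ * y ^ 3 ≤ β₀⁻¹ * y ^ 3 :=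
                mul_le_mul_of_nonneg_right hle (by positivity)
            _ ≤ β₀⁻¹ * R ^ 3 := mul_le_mul_of_nonneg_left hy3 (by positivity)
        simp only [hC]; linarith
      have hextra : L₂ * ((1 + β₀⁻¹ * L₁) * y + (1 + β₀⁻¹ * L₁ + β₀⁻¹ * L₂) * y ^ 2 + β₀⁻¹ * L₂ * y ^ 3)
          ≤ L₁ := by
        calc L₂ * _ ≤ L₂ * C := by apply mul_le_mul_of_nonneg_left hbr (le_of_lt hL₂)
        _ ≤ L₁ := hL₂C
      have heq : Gfun L₁ L₂ β₀ y = L₁ * (1 + y) +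
        L₂ * ((1 + β₀⁻¹ * L₁) * y + (1 + β₀⁻¹ * L₁ + β₀⁻¹ * L₂) * y ^ 2 + β₀⁻¹ * L₂ * y ^ 3) := by
        simp only [Gfun, habs]; ring
      rw [heq]
      nlinarith
  -- lower-bound integral
  have hsub : Set.Ioc L₁ R ⊆ Set.Ici L₁ := fun y hy => le_of_lt hy.1
  have step1 : (∫⁻ y in Set.Ioc L₁ R, ENNReal.ofReal ((2 * L₁ * (1 + y))⁻¹))
      ≤ ∫⁻ y in Set.Ici L₁, ENNReal.ofReal ((Gfun L₁ L₂ β₀ y)⁻¹) := by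
    calc (∫⁻ y in Set.Ioc L₁ R, ENNReal.ofReal ((2 * L₁ * (1 + y))⁻¹))
        ≤ ∫⁻ y in Set.Ioc L₁ R, ENNReal.ofReal ((Gfun L₁ L₂ β₀ y)⁻¹) :=
          lintegral_mono_ae ((ae_restrict_mem measurableSet_Ioc).mono key)
      _ ≤ _ := lintegral_mono_set hsub
  refine lt_of_lt_of_le ?_ step1
  -- compute the explicit integral
  have hcont : ContinuousOn (fun y : ℝ => (2 * L₁ * (1 + y))⁻¹) (Set.uIcc L₁ R) := by
    apply ContinuousOn.inv₀
    · fun_prop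
    · intro x hx
      rw [Set.uIcc_of_le (le_of_lt hRgt)] at hx
      have : L₁ ≤ x := hx.1
      nlinarith
  have hInt : IntervalIntegrable (fun y : ℝ => (2 * L₁ * (1 + y))⁻¹) volume L₁ R :=
    hcont.intervalIntegrable
  have hIntOn : IntegrableOn (fun y : ℝ => (2 * L₁ * (1 + y))⁻¹) (Set.Ioc L₁ R) volume :=
    (intervalIntegrable_iff_integrableOn_Ioc_of_le (le_of_lt hRgt)).mp hInt
  have hval : (∫ y in L₁..R, (2 * L₁ * (1 + y))⁻¹) = M + 1 := by
    have h1 : (∫ y in L₁..R, (2 * L₁ * (1 + y))⁻¹)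
        = (2 * L₁)⁻¹ * ∫ y in L₁..R, (1 + y)⁻¹ := by
      rw [← intervalIntegral.integral_const_mul]
      congr 1; ext y
      rw [mul_inv]
    have h2 : (∫ y in L₁..R, (1 + y)⁻¹) = Real.log ((R + 1) / (L₁ + 1)) := by
      have : (∫ y in L₁..R, (1 + y)⁻¹) = ∫ y in L₁..R, ((fun x : ℝ => x⁻¹) (y + 1)) := by
        congr 1; ext y; rw [add_comm]
      rw [this, intervalIntegral.integral_comp_add_right (fun x : ℝ => x⁻¹) 1]
      rw [integral_inv]
      rw [Set.uIcc_of_le (by linarith)]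
      intro h
      have := h.1
      linarith
    rw [h1, h2]
    have hR1 : R + 1 = (1 + L₁) * Real.exp (2 * L₁ * (M + 1)) := by rw [hR]; ring
    rw [hR1]
    rw [show (1 + L₁) * Real.exp (2 * L₁ * (M + 1)) / (L₁ + 1) = Real.exp (2 * L₁ * (M + 1)) by
      field_simp; ring]
    rw [Real.log_exp]
    field_simp
  have hnn : 0 ≤ᵐ[volume.restrict (Set.Ioc L₁ R)] (fun y : ℝ => (2 * L₁ * (1 + y))⁻¹) := by
    filter_upwards [ae_restrict_mem measurableSet_Ioc] with y hy
    have : L₁ < y := hy.1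
    have : 0 < 2 * L₁ * (1 + y) := by nlinarith
    positivity
  have heq2 : (∫⁻ y in Set.Ioc L₁ R, ENNReal.ofReal ((2 * L₁ * (1 + y))⁻¹))
      = ENNReal.ofReal (M + 1) := by
    rw [← ofReal_integral_eq_lintegral_ofReal hIntOn hnn]
    congr 1
    rw [← hval, intervalIntegral.integral_of_le (le_of_lt hRgt)]
  rw [heq2]
  exact ENNReal.ofReal_lt_ofReal_iff_of_nonneg (le_of_lt hM) |>.mpr (by linarith)
end
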